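/- Let |ψ⟩ be a quantum state on registers C (holding T qubits) and R, of the form |ψ⟩ = (1/√(T+1)) Σ_{t=0}^{T} |unary(t)⟩_C ⊗ |φ_t⟩_R where unary(t) is the T-bit unary encoding of t. Let C_tr ⊆ {1,...,T} be a subset of clock qubit positions to be traced out. Then for any t ≠ t', the operator Tr_{C_tr}(|unary(t)⟩⟨unary(t')|) is nonzero only if for every i ∈ C_tr, either both t,t' > i or both t,t' < i. Consequently, Tr_{C_tr}(|ψ⟩⟨ψ|) is a convex combination Σ_j (|I_j|/(T+1)) Tr_{C_tr}(|Φ_{I_j}⟩⟨Φ_{I_j}|) over the maximal intervals I_1,...,I_ℓ of consecutive time steps contained in {0,...,T} determined by C_tr, where |Φ_I⟩ = (1/√|I|) Σ_{t∈I} |unary(t)⟩ ⊗ |φ_t⟩. -/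

import Mathlib

open Matrix Complex

noncomputable section

/-- The `T`-bit unary encoding of `t ∈ {0, …, T}`: the ℓ-th bit (0-indexed)
is `1` iff `ℓ < t`. -/
def unary {T : ℕ} (t : Fin (T + 1)) : Fin T → Fin 2 :=
  fun ℓ => if (ℓ : ℕ) < (t : ℕ) then 1 else 0

/-- Outer product `|u⟩⟨u|` of a vector. -/
def vecOuter {α : Type*} (u : α → ℂ) : Matrix α α ℂ :=
  Matrix.of fun x y => u x * star (u y)

/-- Partial trace over the clock qubits in `Ctr`, keeping the remaining clock
qubits and the register `r`. -/
def clockTraceOut {T : ℕ} {r : Type*} [Fintype r] (Ctr : Finset (Fin T))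
    (ρ : Matrix ((Fin T → Fin 2) × r) ((Fin T → Fin 2) × r) ℂ) :
    Matrix (({i : Fin T // i ∉ Ctr} → Fin 2) × r)
      (({i : Fin T // i ∉ Ctr} → Fin 2) × r) ℂ :=
  Matrix.of fun a b => ∑ z : {i : Fin T // i ∈ Ctr} → Fin 2,
    ρ (fun i => if h : i ∈ Ctr then z ⟨i, h⟩ else a.1 ⟨i, h⟩, a.2)
      (fun i => if h : i ∈ Ctr then z ⟨i, h⟩ else b.1 ⟨i, h⟩, b.2)

/-- The (normalized) restriction `|Φ_I⟩ = |I|^{-1/2} Σ_{t ∈ I} |unary(t)⟩ ⊗ |φ_t⟩`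
of a history state to a set `I` of time steps. -/
def intervalState {T : ℕ} {r : Type*} [Fintype r] (φ : Fin (T + 1) → r → ℂ)
    (I : Finset (Fin (T + 1))) : ((Fin T → Fin 2) × r) → ℂ :=
  fun p => ((Real.sqrt I.card : ℝ) : ℂ)⁻¹ *
    ∑ t ∈ I, (if p.1 = unary t then 1 else 0) * φ t p.2

/-- `t` and `t'` lie in the same maximal interval of `{0,…,T}` determined by the
traced-out clock positions `Ctr`: no position of `Ctr` separates them, i.e. their
unary encodings agree on `Ctr`. -/
def sameBlock {T : ℕ} (Ctr : Finset (Fin T)) (t t' : Fin (T + 1)) : Prop :=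
  ∀ i ∈ Ctr, ((i : ℕ) < (t : ℕ) ↔ (i : ℕ) < (t' : ℕ))

instance {T : ℕ} (Ctr : Finset (Fin T)) (t t' : Fin (T + 1)) :
    Decidable (sameBlock Ctr t t') := by
  unfold sameBlock; infer_instance

/-!
Tracing out clock qubit `i` kills the cross term `|unary t⟩⟨unary t'|` unless the `i`-th bits
of `unary t` and `unary t'` agree, i.e. unless `i` fails to separate `t` from `t'`. Hence
`Tr_{C_tr}(|ψ⟩⟨ψ|)` keeps only the terms `(s, s')` with `s, s'` in a common block `B`.
On the other side, such a term occurs in `|Φ_{B(t)}⟩⟨Φ_{B(t)}|` with weight `|B|⁻¹` for each of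
the `|B|` times `t ∈ B`, so the total weight matches.
-/

open Finset

theorem Finset.sum_inv_card_smul_sum_sum_filter {α 𝕜 M : Type*} [Fintype α] [DivisionRing 𝕜]
    [CharZero 𝕜] [AddCommMonoid M] [Module 𝕜 M] {r : α → α → Prop} [DecidableRel r]
    (hr : Equivalence r) (f : α → α → M) (hf : ∀ s s', ¬ r s s' → f s s' = 0) :
    ∑ t, ((univ.filter (r t)).card : 𝕜)⁻¹ •
        ∑ s ∈ univ.filter (r t), ∑ s' ∈ univ.filter (r t), f s s' =
      ∑ s, ∑ s', f s s' := by
  have hclass : ∀ {s t}, r t s → univ.filter (r t) = univ.filter (r s) := fun hts => by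
    ext u; simp only [mem_filter, mem_univ, true_and]
    exact ⟨hr.trans (hr.symm hts), hr.trans hts⟩
  have hsum : ∀ s, ∑ s' ∈ univ.filter (r s), f s s' = ∑ s', f s s' := fun s =>
    sum_filter_of_ne fun s' _ => not_imp_comm.1 (hf s s')
  calc ∑ t, ((univ.filter (r t)).card : 𝕜)⁻¹ •
        ∑ s ∈ univ.filter (r t), ∑ s' ∈ univ.filter (r t), f s s'
      = ∑ t, ∑ s ∈ univ.filter (r t), ((univ.filter (r s)).card : 𝕜)⁻¹ • ∑ s', f s s' := by
        refine sum_congr rfl fun t _ => ?_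
        rw [smul_sum]
        refine sum_congr rfl fun s hs => ?_
        rw [hclass (mem_filter.1 hs).2, hsum]
    _ = ∑ s, ∑ t ∈ univ.filter (r s), ((univ.filter (r s)).card : 𝕜)⁻¹ • ∑ s', f s s' :=
        sum_comm' fun t s => by simpa using ⟨hr.symm, hr.symm⟩
    _ = ∑ s, ∑ s', f s s' := by
        refine sum_congr rfl fun s _ => ?_
        have hs : (univ.filter (r s)).card ≠ 0 := card_ne_zero.2 ⟨s, by simp [hr.refl]⟩
        rw [sum_const, ← Nat.cast_smul_eq_nsmul 𝕜, smul_smul,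
          mul_inv_cancel₀ (Nat.cast_ne_zero.2 hs), one_smul]

section

variable {T : ℕ} {r : Type*} [Fintype r]

theorem sameBlock_equivalence (Ctr : Finset (Fin T)) : Equivalence (sameBlock Ctr) where
  refl _ _ _ := Iff.rfl
  symm h i hi := (h i hi).symm
  trans h₁ h₂ i hi := (h₁ i hi).trans (h₂ i hi)

theorem unary_apply_eq_unary_apply_iff (t t' : Fin (T + 1)) (i : Fin T) :
    unary t i = unary t' i ↔ ((i : ℕ) < t ↔ (i : ℕ) < t') := by
  unfold unary; split_ifs <;> simp [*]

theorem clockTraceOut_smul (Ctr : Finset (Fin T)) (c : ℂ)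
    (ρ : Matrix ((Fin T → Fin 2) × r) ((Fin T → Fin 2) × r) ℂ) :
    clockTraceOut Ctr (c • ρ) = c • clockTraceOut Ctr ρ := by
  ext; simp [clockTraceOut, mul_sum]

theorem clockTraceOut_sum {ι : Type*} (Ctr : Finset (Fin T)) (s : Finset ι)
    (ρ : ι → Matrix ((Fin T → Fin 2) × r) ((Fin T → Fin 2) × r) ℂ) :
    clockTraceOut Ctr (∑ i ∈ s, ρ i) = ∑ i ∈ s, clockTraceOut Ctr (ρ i) := by
  ext; simp only [clockTraceOut, Matrix.sum_apply, of_apply]; exact sum_comm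

/-- `|unary t⟩ ⊗ |φ_t⟩`. -/
def historyKet (φ : Fin (T + 1) → r → ℂ) (t : Fin (T + 1)) : (Fin T → Fin 2) × r → ℂ :=
  fun p => (if p.1 = unary t then 1 else 0) * φ t p.2

theorem clockTraceOut_historyKet_eq_zero (φ : Fin (T + 1) → r → ℂ) {Ctr : Finset (Fin T)}
    {t t' : Fin (T + 1)} (h : ¬ sameBlock Ctr t t') :
    clockTraceOut Ctr (vecMulVec (historyKet φ t) (star (historyKet φ t'))) = 0 := by
  ext a b
  refine sum_eq_zero fun z _ => ?_
  simp only [vecMulVec_apply, historyKet, Pi.star_apply, star_mul']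
  split_ifs with ha hb
  · refine absurd (fun i hi => ?_) h
    rw [← unary_apply_eq_unary_apply_iff, ← congrFun ha i, ← congrFun hb i]
    simp [hi]
  all_goals simp

theorem vecOuter_intervalState (φ : Fin (T + 1) → r → ℂ) (I : Finset (Fin (T + 1))) :
    vecOuter (intervalState φ I) =
      (#I : ℂ)⁻¹ • ∑ s ∈ I, ∑ s' ∈ I, vecMulVec (historyKet φ s) (star (historyKet φ s')) := by
  ext p q
  simp only [vecOuter, intervalState, historyKet, of_apply, Matrix.smul_apply, Matrix.sum_apply,
    vecMulVec_apply, Pi.star_apply]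
  have hnorm : ((√(#I : ℝ) : ℂ))⁻¹ * star ((√(#I : ℝ) : ℂ))⁻¹ = (#I : ℂ)⁻¹ := by
    rw [star_inv₀, Complex.star_def, Complex.conj_ofReal, ← mul_inv, ← Complex.ofReal_mul,
      Real.mul_self_sqrt (Nat.cast_nonneg _), Complex.ofReal_natCast]
  rw [star_mul', mul_mul_mul_comm, hnorm, star_sum, sum_mul_sum, smul_eq_mul]

end

theorem history_state_traceOut_general {T : ℕ} {r : Type*} [Fintype r]
    (φ : Fin (T + 1) → r → ℂ)
    (Ctr : Finset (Fin T)) :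
    (∀ t t' : Fin (T + 1), t ≠ t' →
      clockTraceOut Ctr
          (Matrix.of fun p q =>
            ((if p.1 = unary t then (1 : ℂ) else 0) * φ t p.2) *
              star ((if q.1 = unary t' then (1 : ℂ) else 0) * φ t' q.2)) ≠ 0 →
      sameBlock Ctr t t') ∧
    clockTraceOut Ctr (vecOuter (intervalState φ Finset.univ)) =
      (((T : ℂ) + 1))⁻¹ •
        ∑ t : Fin (T + 1),
          clockTraceOut Ctr
            (vecOuter (intervalState φ (Finset.univ.filter fun t' => sameBlock Ctr t t'))) := by
  have hcross (t t' : Fin (T + 1)) (h : ¬ sameBlock Ctr t t') :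
      clockTraceOut Ctr (vecMulVec (historyKet φ t) (star (historyKet φ t'))) = 0 :=
    clockTraceOut_historyKet_eq_zero φ h
  refine ⟨fun t t' _ hne => by_contra fun h => hne (hcross t t' h), ?_⟩
  simp only [vecOuter_intervalState, clockTraceOut_smul, clockTraceOut_sum]
  rw [sum_inv_card_smul_sum_sum_filter (sameBlock_equivalence Ctr) _ hcross, card_univ,
    Fintype.card_fin, Nat.cast_succ]

/-- for a history state
`|ψ⟩ = (T+1)^{-1/2} Σ_t |unary(t)⟩_C ⊗ |φ_t⟩_R` and a set `C_tr` of traced-out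
clock positions:
(1) for `t ≠ t'`, `Tr_{C_tr}(|unary(t)⟩⟨unary(t')| ⊗ |φ_t⟩⟨φ_{t'}|)` is nonzero
only if every `i ∈ C_tr` lies on the same side of both `t` and `t'`; and
(2) `Tr_{C_tr}(|ψ⟩⟨ψ|)` is the convex combination, with weights `|I_j|/(T+1)`,
of the states `Tr_{C_tr}(|Φ_{I_j}⟩⟨Φ_{I_j}|)` over the maximal intervals `I_j`
determined by `C_tr` (equivalently, `(T+1)^{-1} Σ_t Tr_{C_tr}(|Φ_{B(t)}⟩⟨Φ_{B(t)}|)`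
where `B(t)` is the maximal interval containing `t`). -/
theorem history_state_traceOut {T : ℕ} {r : Type*} [Fintype r]
    (φ : Fin (T + 1) → r → ℂ) (hφ : ∀ t, ∑ s, Complex.normSq (φ t s) = 1)
    (Ctr : Finset (Fin T)) :
    (∀ t t' : Fin (T + 1), t ≠ t' →
      clockTraceOut Ctr
          (Matrix.of fun p q =>
            ((if p.1 = unary t then (1 : ℂ) else 0) * φ t p.2) *
              star ((if q.1 = unary t' then (1 : ℂ) else 0) * φ t' q.2)) ≠ 0 →
      sameBlock Ctr t t') ∧
    clockTraceOut Ctr (vecOuter (intervalState φ Finset.univ)) =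
      (((T : ℂ) + 1))⁻¹ •
        ∑ t : Fin (T + 1),
          clockTraceOut Ctr
            (vecOuter (intervalState φ (Finset.univ.filter fun t' => sameBlock Ctr t t'))) :=
  history_state_traceOut_general φ Ctr
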